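/- arXiv:1411.4173 — 4 statements merged into one kernel-verified Lean document; each statement's English description precedes it below -/
import Mathlib

section
/- (Strong law of large numbers for submartingale differences.) Let M be a submartingale in an imprecise probability tree such that ΔM is uniformly bounded (there is a real B with |ΔM(s)(x)| ≤ B for all situations s and all successor values x). Then the event {ω ∈ Ω : liminf_{n→∞} (M(ω^n) − M(□))/n < 0} is strictly null; i.e., liminf_{n→∞} (M(ω^n) − M(□))/n ≥ 0 strictly almost surely. -/
/-! For `0 ≤ c` with `c B ≤ 1/2`, the product `∏_{k<n} (1 - c ΔM(ω^k))` is a nonnegative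
supermartingale (its increments are `-c` times a nonnegative multiple of `ΔM`), and since
`exp (-(x + 2x²)) ≤ 1 - x` for `x ≤ 1/2` it is at least `exp (-c (M_n - M_0) - 2 n c² B²)`.
On a path where `M_n - M_0 ≤ -ε n` infinitely often, the choice `c = ε / (4B²)` makes it exceed
`exp (c ε n / 2)` infinitely often, so it is unbounded along the path. Stopping it at the levels
`2 · 4^j` and mixing the stopped processes with weights `2^{-(j+1)}` turns unboundedness into
divergence to `+∞`; a last mixture over `ε = 1/(i+1)` covers the whole event. -/

open Filter Topology

namespace IP

/-- A situation of length `n`: a tuple of the first `n` states. -/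
abbrev Sit (𝒳 : ℕ → Type) (n : ℕ) := (i : Fin n) → 𝒳 i

/-- A path: an infinite sequence of states. -/
abbrev Path (𝒳 : ℕ → Type) := (i : ℕ) → 𝒳 i

/-- The initial segment `ω^n` of a path. -/
def res {𝒳 : ℕ → Type} (ω : Path 𝒳) (n : ℕ) : Sit 𝒳 n := fun i => ω i

/-- The initial (empty) situation `□`. -/
def emptySit {𝒳 : ℕ → Type} : Sit 𝒳 0 := fun i => i.elim0

/-- Append a next state to a situation. -/
def snoc {𝒳 : ℕ → Type} {n : ℕ} (s : Sit 𝒳 n) (x : 𝒳 n) : Sit 𝒳 (n + 1) := fun i =>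
  if h : (i : ℕ) < n then s ⟨i, h⟩
  else cast (congrArg 𝒳 (Nat.le_antisymm (Nat.le_of_not_lt h) (Nat.lt_succ_iff.mp i.isLt))) x

/-- Truncate a situation of length `n` to its first `k` states. -/
def trunc {𝒳 : ℕ → Type} {n : ℕ} (s : Sit 𝒳 n) (k : ℕ) (h : k ≤ n) : Sit 𝒳 k :=
  fun i => s ⟨i, lt_of_lt_of_le i.isLt h⟩

/-- A (coherent) lower expectation on a nonempty finite set. -/
def IsLE {Y : Type} [Fintype Y] [Nonempty Y] (E : (Y → ℝ) → ℝ) : Prop :=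
  (∀ f : Y → ℝ, (⨅ y, f y) ≤ E f) ∧
  (∀ f g : Y → ℝ, E f + E g ≤ E (fun y => f y + g y)) ∧
  (∀ (f : Y → ℝ) (c : ℝ), 0 ≤ c → E (fun y => c * f y) = c * E f)

/-- Submartingale w.r.t. the local models `Q` of an imprecise probability tree. -/
def IsSubmartingale {𝒳 : ℕ → Type} (Q : ∀ n, Sit 𝒳 n → (𝒳 n → ℝ) → ℝ)
    (F : ∀ n, Sit 𝒳 n → ℝ) : Prop :=
  ∀ (n : ℕ) (s : Sit 𝒳 n), 0 ≤ Q n s (fun x => F (n + 1) (snoc s x) - F n s)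

/-- Supermartingale: `-F` is a submartingale. -/
def IsSupermartingale {𝒳 : ℕ → Type} (Q : ∀ n, Sit 𝒳 n → (𝒳 n → ℝ) → ℝ)
    (F : ∀ n, Sit 𝒳 n → ℝ) : Prop :=
  IsSubmartingale Q (fun n s => -F n s)

/-- A test supermartingale: nonnegative, starting at 1. -/
def IsTestSupermartingale {𝒳 : ℕ → Type} (Q : ∀ n, Sit 𝒳 n → (𝒳 n → ℝ) → ℝ)
    (F : ∀ n, Sit 𝒳 n → ℝ) : Prop :=
  IsSupermartingale Q F ∧ (∀ n s, 0 ≤ F n s) ∧ F 0 emptySit = 1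

/-- An event is strictly null if some test supermartingale converges to `+∞` on it. -/
def StrictlyNull {𝒳 : ℕ → Type} (Q : ∀ n, Sit 𝒳 n → (𝒳 n → ℝ) → ℝ)
    (A : Set (Path 𝒳)) : Prop :=
  ∃ F : ∀ n, Sit 𝒳 n → ℝ, IsTestSupermartingale Q F ∧
    ∀ ω ∈ A, Tendsto (fun n => F n (res ω n)) atTop atTop

/-- `limsup_n F(ω^n)` as an extended real. -/
noncomputable def pathLimsup {𝒳 : ℕ → Type} (F : ∀ n, Sit 𝒳 n → ℝ) (ω : Path 𝒳) : EReal :=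
  Filter.limsup (fun n => (F n (res ω n) : EReal)) atTop

/-- `liminf_n F(ω^n)` as an extended real. -/
noncomputable def pathLiminf {𝒳 : ℕ → Type} (F : ∀ n, Sit 𝒳 n → ℝ) (ω : Path 𝒳) : EReal :=
  Filter.liminf (fun n => (F n (res ω n) : EReal)) atTop

/-- A real process bounded above. -/
def BddAbv {𝒳 : ℕ → Type} (F : ∀ n, Sit 𝒳 n → ℝ) : Prop := ∃ B : ℝ, ∀ n s, F n s ≤ B

/-- A real process bounded below. -/
def BddBlw {𝒳 : ℕ → Type} (F : ∀ n, Sit 𝒳 n → ℝ) : Prop := ∃ B : ℝ, ∀ n s, B ≤ F n s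

/-- Conditional global lower expectation `E(f|s)` of an extended real variable. -/
noncomputable def lexp {𝒳 : ℕ → Type} (Q : ∀ n, Sit 𝒳 n → (𝒳 n → ℝ) → ℝ) {n : ℕ}
    (s : Sit 𝒳 n) (f : Path 𝒳 → EReal) : EReal :=
  sSup ((fun F : ∀ k, Sit 𝒳 k → ℝ => (F n s : EReal)) ''
    {F : ∀ k, Sit 𝒳 k → ℝ | IsSubmartingale Q F ∧ BddAbv F ∧
      ∀ ω : Path 𝒳, res ω n = s → pathLimsup F ω ≤ f ω})

/-- Conditional global upper expectation `Ē(f|s)`. -/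
noncomputable def uexp {𝒳 : ℕ → Type} (Q : ∀ n, Sit 𝒳 n → (𝒳 n → ℝ) → ℝ) {n : ℕ}
    (s : Sit 𝒳 n) (f : Path 𝒳 → EReal) : EReal :=
  - lexp Q s (fun ω => - f ω)

/-- The local models of a (time-homogeneous) imprecise Markov chain with initial model `E1`
and transition models `QT`. -/
def markovQ {X : Type} (E1 : (X → ℝ) → ℝ) (QT : X → (X → ℝ) → ℝ) :
    ∀ n, Sit (fun _ => X) n → (X → ℝ) → ℝ
  | 0, _ => E1
  | n + 1, s => QT (s ⟨n, Nat.lt_succ_self n⟩)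

/-- Prefix a path with a situation (fixed state space). -/
def prependX {X : Type} {n : ℕ} (s : Sit (fun _ => X) n) (ω : ℕ → X) : ℕ → X :=
  fun i => if h : i < n then s ⟨i, h⟩ else ω (i - n)

/-- Extension of a lower transition operator to extended real maps. -/
noncomputable def Text {X : Type} (T : (X → ℝ) → X → ℝ) (g : X → EReal) : X → EReal :=
  fun x => sSup ((fun h : X → ℝ => (T h x : EReal)) '' {h : X → ℝ | ∀ y, (h y : EReal) ≤ g y})

/-- The variation (semi)norm `max h - min h`. -/
noncomputable def varnorm {X : Type} [Fintype X] [Nonempty X] (h : X → ℝ) : ℝ :=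
  (⨆ x, h x) - ⨅ x, h x

/-- The (weak) coefficient of ergodicity of a lower transition operator. -/
noncomputable def coeff {X : Type} [Fintype X] [Nonempty X] (S : (X → ℝ) → X → ℝ) : ℝ :=
  sSup {v : ℝ | ∃ h : X → ℝ, (∀ x, 0 ≤ h x ∧ h x ≤ 1) ∧ v = varnorm (S h)}

/-- Extend a situation to a path, arbitrarily. -/
noncomputable def extend {𝒳 : ℕ → Type} [∀ k, Nonempty (𝒳 k)] {n : ℕ} (t : Sit 𝒳 n) :
    Path 𝒳 :=
  fun i => if h : i < n then t ⟨i, h⟩ else Classical.arbitrary (𝒳 i)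

section Situations

variable {𝒳 : ℕ → Type}

@[simp]
lemma trunc_snoc {n : ℕ} (s : Sit 𝒳 n) (x : 𝒳 n) : trunc (snoc s x) n n.le_succ = s := by
  funext i
  simp [trunc, snoc]

lemma snoc_trunc_last {n : ℕ} (s : Sit 𝒳 (n + 1)) :
    snoc (trunc s n n.le_succ) (s (Fin.last n)) = s := by
  funext ⟨i, hi⟩
  simp only [snoc, trunc]
  split_ifs with h
  · rfl
  · obtain rfl : i = n := by omega
    rfl

lemma snoc_res (ω : Path 𝒳) (n : ℕ) : snoc (res ω n) (ω n) = res ω (n + 1) := by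
  funext ⟨i, hi⟩
  simp only [snoc, res]
  split_ifs with h
  · rfl
  · obtain rfl : i = n := by omega
    rfl

theorem Sit.induction {motive : ∀ n, Sit 𝒳 n → Prop} (zero : motive 0 emptySit)
    (step : ∀ n s x, motive n s → motive (n + 1) (snoc s x)) : ∀ n s, motive n s := by
  intro n
  induction n with
  | zero =>
    intro s
    obtain rfl : s = emptySit := funext fun i => i.elim0
    exact zero
  | succ n ih =>
    intro s
    have := step n _ (s (Fin.last n)) (ih (trunc s n n.le_succ))
    rwa [snoc_trunc_last] at this

end Situations

lemma exp_neg_le_one_sub {x : ℝ} (hx : x ≤ 1 / 2) : Real.exp (-(x + 2 * x ^ 2)) ≤ 1 - x := by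
  have hpos : 0 < 1 + x + 2 * x ^ 2 := by nlinarith [sq_nonneg (x + 1 / 4)]
  rw [Real.exp_neg, inv_le_comm₀ (Real.exp_pos _) (by linarith)]
  calc (1 - x)⁻¹ ≤ 1 + x + 2 * x ^ 2 := by
        rw [inv_le_iff_one_le_mul₀ (by linarith)]
        nlinarith [sq_nonneg x]
    _ ≤ Real.exp (x + 2 * x ^ 2) := by linarith [Real.add_one_le_exp (x + 2 * x ^ 2)]

lemma exists_frequently_le_of_liminf_div_lt_zero {u : ℕ → ℝ}
    (h : liminf (fun n : ℕ => ((u n / n : ℝ) : EReal)) atTop < 0) :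
    ∃ i : ℕ, ∃ᶠ n : ℕ in atTop, u n ≤ -(1 / ((i : ℝ) + 1)) * n := by
  obtain ⟨r, hr, hr0⟩ := EReal.lt_iff_exists_real_btwn.1 h
  have hr0 : r < 0 := by exact_mod_cast hr0
  obtain ⟨i, hi⟩ := exists_nat_one_div_lt (neg_pos.2 hr0)
  refine ⟨i, (frequently_lt_of_liminf_lt (by isBoundedDefault) hr).mono fun n hn => ?_⟩
  have hn : u n / n < r := by exact_mod_cast hn
  have hn0 : (0 : ℝ) < n := by
    rcases (Nat.cast_nonneg (α := ℝ) n).eq_or_lt with h0 | h0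
    · rw [← h0, div_zero] at hn
      linarith
    · exact h0
  rw [div_lt_iff₀ hn0] at hn
  nlinarith

namespace IsLE

variable {Y : Type} [Fintype Y] [Nonempty Y] {E : (Y → ℝ) → ℝ}

lemma map_zero (hE : IsLE E) : E 0 = 0 := by
  have h := hE.2.2 0 0 le_rfl
  simp only [zero_mul] at h
  exact h

lemma sum_le (hE : IsLE E) {ι : Type*} (A : Finset ι) (f : ι → Y → ℝ) :
    ∑ i ∈ A, E (f i) ≤ E (∑ i ∈ A, f i) := by
  classical
  induction A using Finset.cons_induction with
  | empty => simpa using hE.map_zero.ge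
  | cons a A ha ih =>
    rw [Finset.sum_cons, Finset.sum_cons]
    exact (add_le_add le_rfl ih).trans (hE.2.1 _ _)

lemma lipschitzWith (hE : IsLE E) : LipschitzWith 1 E := by
  refine LipschitzWith.of_le_add_mul 1 fun f g => ?_
  rw [NNReal.coe_one, one_mul]
  have hinf : -dist f g ≤ ⨅ y, (g - f) y := le_ciInf fun y => by
    have := norm_le_pi_norm (g - f) y
    rw [Real.norm_eq_abs] at this
    rw [dist_comm, dist_eq_norm]
    linarith [neg_abs_le ((g - f) y)]
  have hadd : E f + E (g - f) ≤ E g := by simpa using hE.2.1 f (g - f)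
  linarith [hE.1 (g - f)]

lemma nonneg_of_hasSum (hE : IsLE E) {ι : Type*} {f : ι → Y → ℝ} {g : Y → ℝ} (hfg : HasSum f g)
    (hf : ∀ i, 0 ≤ E (f i)) : 0 ≤ E g :=
  ge_of_tendsto' ((hE.lipschitzWith.continuous.tendsto g).comp hfg) fun A =>
    (Finset.sum_nonneg fun i _ => hf i).trans (hE.sum_le A f)

end IsLE

section Processes

variable {𝒳 : ℕ → Type} {Q : ∀ n, Sit 𝒳 n → (𝒳 n → ℝ) → ℝ}

lemma isSupermartingale_iff {F : ∀ n, Sit 𝒳 n → ℝ} :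
    IsSupermartingale Q F ↔ ∀ n s, 0 ≤ Q n s (fun x => F n s - F (n + 1) (snoc s x)) := by
  simp only [IsSupermartingale, IsSubmartingale, neg_sub_neg]

section Mixture

variable {ι : Type*}

noncomputable def mix (w : ι → ℝ) (T : ι → ∀ n, Sit 𝒳 n → ℝ) : ∀ n, Sit 𝒳 n → ℝ :=
  fun n s => ∑' i, w i * T i n s

variable {w : ι → ℝ} {T : ι → ∀ n, Sit 𝒳 n → ℝ} {C : ℕ → ℝ}

lemma summable_mul_of_le (hw : ∀ i, 0 ≤ w i) (hw1 : HasSum w 1) (hT : ∀ i n s, 0 ≤ T i n s)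
    (hTC : ∀ i n s, T i n s ≤ C n) (n : ℕ) (s : Sit 𝒳 n) : Summable fun i => w i * T i n s :=
  Summable.of_nonneg_of_le (fun i => mul_nonneg (hw i) (hT i n s))
    (fun i => mul_le_mul_of_nonneg_left (hTC i n s) (hw i)) (hw1.summable.mul_right (C n))

lemma mix_le (hw : ∀ i, 0 ≤ w i) (hw1 : HasSum w 1) (hT : ∀ i n s, 0 ≤ T i n s)
    (hTC : ∀ i n s, T i n s ≤ C n) (n : ℕ) (s : Sit 𝒳 n) : mix w T n s ≤ C n :=
  calc mix w T n s ≤ ∑' i, w i * C n :=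
        (summable_mul_of_le hw hw1 hT hTC n s).tsum_le_tsum
          (fun i => mul_le_mul_of_nonneg_left (hTC i n s) (hw i)) (hw1.summable.mul_right _)
    _ = C n := by rw [hw1.summable.tsum_mul_right, hw1.tsum_eq, one_mul]

lemma mul_le_mix (hw : ∀ i, 0 ≤ w i) (hw1 : HasSum w 1) (hT : ∀ i n s, 0 ≤ T i n s)
    (hTC : ∀ i n s, T i n s ≤ C n) (i : ι) (n : ℕ) (s : Sit 𝒳 n) :
    w i * T i n s ≤ mix w T n s :=
  (summable_mul_of_le hw hw1 hT hTC n s).le_tsum i fun j _ => mul_nonneg (hw j) (hT j n s)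

lemma tendsto_mix_atTop (hw : ∀ i, 0 ≤ w i) (hw1 : HasSum w 1) (hT : ∀ i n s, 0 ≤ T i n s)
    (hTC : ∀ i n s, T i n s ≤ C n) {i : ι} (hwi : 0 < w i) {ω : Path 𝒳}
    (h : Tendsto (fun n => T i n (res ω n)) atTop atTop) :
    Tendsto (fun n => mix w T n (res ω n)) atTop atTop :=
  tendsto_atTop_mono (fun n => mul_le_mix hw hw1 hT hTC i n _) (h.const_mul_atTop hwi)

lemma isTestSupermartingale_mix [∀ n, Fintype (𝒳 n)] [∀ n, Nonempty (𝒳 n)]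
    (hQ : ∀ n s, IsLE (Q n s)) (hw : ∀ i, 0 ≤ w i) (hw1 : HasSum w 1)
    (hT : ∀ i, IsTestSupermartingale Q (T i)) (hTC : ∀ i n s, T i n s ≤ C n) :
    IsTestSupermartingale Q (mix w T) := by
  have hT0 : ∀ i n s, 0 ≤ T i n s := fun i => (hT i).2.1
  have hsum := summable_mul_of_le hw hw1 hT0 hTC
  refine ⟨isSupermartingale_iff.2 fun n s => ?_, fun n s => tsum_nonneg fun i =>
    mul_nonneg (hw i) (hT0 i n s), by simp only [mix, (hT _).2.2, mul_one, hw1.tsum_eq]⟩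
  have hdiff : HasSum (fun i x => w i * (T i n s - T i (n + 1) (snoc s x)))
      (fun x => mix w T n s - mix w T (n + 1) (snoc s x)) :=
    Pi.hasSum.2 fun x => by
      simpa only [mul_sub, mix] using (hsum n s).hasSum.sub (hsum _ _).hasSum
  refine (hQ n s).nonneg_of_hasSum hdiff fun i => ?_
  rw [(hQ n s).2.2 _ _ (hw i)]
  exact mul_nonneg (hw i) (isSupermartingale_iff.1 (hT i).1 n s)

end Mixture

section Stopping

noncomputable def stopAtLevel (F : ∀ n, Sit 𝒳 n → ℝ) (L : ℝ) : ∀ n, Sit 𝒳 n → ℝ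
  | 0, s => F 0 s
  | n + 1, s =>
      if L ≤ stopAtLevel F L n (trunc s n n.le_succ) then stopAtLevel F L n (trunc s n n.le_succ)
      else F (n + 1) s

variable {F : ∀ n, Sit 𝒳 n → ℝ} {L : ℝ}

lemma stopAtLevel_snoc {n : ℕ} (s : Sit 𝒳 n) (x : 𝒳 n) :
    stopAtLevel F L (n + 1) (snoc s x) =
      if L ≤ stopAtLevel F L n s then stopAtLevel F L n s else F (n + 1) (snoc s x) := by
  rw [stopAtLevel, trunc_snoc]

lemma stopAtLevel_eq_or_le {n : ℕ} (s : Sit 𝒳 n) :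
    stopAtLevel F L n s = F n s ∨ L ≤ stopAtLevel F L n s := by
  cases n with
  | zero => exact Or.inl rfl
  | succ n =>
    rw [stopAtLevel]
    split_ifs with h
    · exact Or.inr h
    · exact Or.inl rfl

lemma stopAtLevel_nonneg (hF : ∀ n s, 0 ≤ F n s) : ∀ n s, 0 ≤ stopAtLevel F L n s :=
  Sit.induction (hF 0 _) fun n s x ih => by
    rw [stopAtLevel_snoc]
    split_ifs
    exacts [ih, hF _ _]

lemma stopAtLevel_le {C : ℕ → ℝ} (hC : Monotone C) (hFC : ∀ n s, F n s ≤ C n) :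
    ∀ n s, stopAtLevel F L n s ≤ C n :=
  Sit.induction (hFC 0 _) fun n s x ih => by
    rw [stopAtLevel_snoc]
    split_ifs
    exacts [ih.trans (hC n.le_succ), hFC _ _]

lemma le_stopAtLevel {ω : Path 𝒳} {m : ℕ} (hm : L ≤ F m (res ω m)) {n : ℕ} (hmn : m ≤ n) :
    L ≤ stopAtLevel F L n (res ω n) := by
  induction n, hmn using Nat.le_induction with
  | base => exact (stopAtLevel_eq_or_le _).elim (fun h => h ▸ hm) id
  | succ n _ ih => rwa [← snoc_res, stopAtLevel_snoc, if_pos ih]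

lemma isTestSupermartingale_stopAtLevel [∀ n, Fintype (𝒳 n)] [∀ n, Nonempty (𝒳 n)]
    (hQ : ∀ n s, IsLE (Q n s)) (hF : IsTestSupermartingale Q F) :
    IsTestSupermartingale Q (stopAtLevel F L) := by
  refine ⟨isSupermartingale_iff.2 fun n s => ?_, stopAtLevel_nonneg hF.2.1, hF.2.2⟩
  by_cases h : L ≤ stopAtLevel F L n s
  · simp only [stopAtLevel_snoc, h, if_true, sub_self]
    exact (hQ n s).map_zero.ge
  · simp only [stopAtLevel_snoc, h, if_false]
    rw [(stopAtLevel_eq_or_le s).resolve_right h]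
    exact isSupermartingale_iff.1 hF.1 n s

end Stopping

noncomputable def geomWeight (j : ℕ) : ℝ := 1 / 2 / 2 ^ j

lemma hasSum_geomWeight : HasSum geomWeight 1 := hasSum_geometric_two' 1

lemma geomWeight_pos (j : ℕ) : 0 < geomWeight j := by
  unfold geomWeight
  positivity

theorem exists_isTestSupermartingale_tendsto_of_not_bddAbove [∀ n, Fintype (𝒳 n)]
    [∀ n, Nonempty (𝒳 n)] (hQ : ∀ n s, IsLE (Q n s)) {F : ∀ n, Sit 𝒳 n → ℝ}
    (hF : IsTestSupermartingale Q F) {C : ℕ → ℝ} (hC : Monotone C) (hFC : ∀ n s, F n s ≤ C n) :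
    ∃ G, IsTestSupermartingale Q G ∧ (∀ n s, G n s ≤ C n) ∧ ∀ ω : Path 𝒳,
      ¬BddAbove (Set.range fun n => F n (res ω n)) →
        Tendsto (fun n => G n (res ω n)) atTop atTop := by
  set T : ℕ → ∀ n, Sit 𝒳 n → ℝ := fun j => stopAtLevel F (2 * 4 ^ j)
  have hT : ∀ j, IsTestSupermartingale Q (T j) := fun j =>
    isTestSupermartingale_stopAtLevel hQ hF
  have hT0 : ∀ j n s, 0 ≤ T j n s := fun j => (hT j).2.1
  have hTC : ∀ j n s, T j n s ≤ C n := fun j => stopAtLevel_le hC hFC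
  have hw : ∀ j, 0 ≤ geomWeight j := fun j => (geomWeight_pos j).le
  refine ⟨mix geomWeight T, isTestSupermartingale_mix hQ hw hasSum_geomWeight hT hTC,
    mix_le hw hasSum_geomWeight hT0 hTC, fun ω hω => tendsto_atTop.2 fun b => ?_⟩
  obtain ⟨j, hj⟩ := pow_unbounded_of_one_lt b one_lt_two
  obtain ⟨_, ⟨m, rfl⟩, hm⟩ := not_bddAbove_iff.1 hω (2 * 4 ^ j)
  filter_upwards [eventually_ge_atTop m] with n hn
  calc b ≤ 2 ^ j := hj.le
    _ = geomWeight j * (2 * 4 ^ j) := by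
        rw [geomWeight, show (4 : ℝ) ^ j = 2 ^ j * 2 ^ j by rw [← mul_pow]; norm_num]
        field_simp
    _ ≤ geomWeight j * T j n (res ω n) :=
        mul_le_mul_of_nonneg_left (le_stopAtLevel hm.le hn) (hw j)
    _ ≤ mix geomWeight T n (res ω n) := mul_le_mix hw hasSum_geomWeight hT0 hTC j n _

section Multiplicative

variable {M : ∀ n, Sit 𝒳 n → ℝ} {c B : ℝ}

/-- The capital `∏_{k<n} (1 - c ΔM(s^k))` of a gambler who bets the fraction `c` of it against
`M` at every step. -/
noncomputable def multiplicativeProcess (M : ∀ n, Sit 𝒳 n → ℝ) (c : ℝ) : ∀ n, Sit 𝒳 n → ℝ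
  | 0, _ => 1
  | n + 1, s => multiplicativeProcess M c n (trunc s n n.le_succ) *
      (1 - c * (M (n + 1) s - M n (trunc s n n.le_succ)))

lemma multiplicativeProcess_snoc {n : ℕ} (s : Sit 𝒳 n) (x : 𝒳 n) :
    multiplicativeProcess M c (n + 1) (snoc s x) =
      multiplicativeProcess M c n s * (1 - c * (M (n + 1) (snoc s x) - M n s)) := by
  rw [multiplicativeProcess, trunc_snoc]

lemma abs_mul_sub_le (hc : 0 ≤ c) (hB : ∀ n s x, |M (n + 1) (snoc s x) - M n s| ≤ B)
    (n : ℕ) (s : Sit 𝒳 n) (x : 𝒳 n) : |c * (M (n + 1) (snoc s x) - M n s)| ≤ c * B := by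
  rw [abs_mul, abs_of_nonneg hc]
  exact mul_le_mul_of_nonneg_left (hB n s x) hc

lemma multiplicativeProcess_nonneg (hc : 0 ≤ c)
    (hB : ∀ n s x, |M (n + 1) (snoc s x) - M n s| ≤ B) (hcB : c * B ≤ 1 / 2) :
    ∀ n s, 0 ≤ multiplicativeProcess M c n s :=
  Sit.induction zero_le_one fun n s x ih => by
    have := abs_le.1 ((abs_mul_sub_le hc hB n s x).trans hcB)
    rw [multiplicativeProcess_snoc]
    exact mul_nonneg ih (by linarith)

lemma multiplicativeProcess_le_two_pow (hc : 0 ≤ c)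
    (hB : ∀ n s x, |M (n + 1) (snoc s x) - M n s| ≤ B) (hcB : c * B ≤ 1 / 2) :
    ∀ n s, multiplicativeProcess M c n s ≤ 2 ^ n :=
  Sit.induction (pow_zero (2 : ℝ)).ge fun n s x ih => by
    have := abs_le.1 ((abs_mul_sub_le hc hB n s x).trans hcB)
    rw [multiplicativeProcess_snoc, pow_succ]
    exact mul_le_mul ih (by linarith) (by linarith) (by positivity)

lemma exp_le_multiplicativeProcess (hc : 0 ≤ c)
    (hB : ∀ n s x, |M (n + 1) (snoc s x) - M n s| ≤ B) (hcB : c * B ≤ 1 / 2) :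
    ∀ n s, Real.exp (-(c * (M n s - M 0 emptySit)) - 2 * n * (c * B) ^ 2) ≤
      multiplicativeProcess M c n s :=
  Sit.induction (by simp [multiplicativeProcess]) fun n s x ih => by
    set t := c * (M (n + 1) (snoc s x) - M n s)
    have ht := abs_mul_sub_le hc hB n s x
    have hsq : t ^ 2 ≤ (c * B) ^ 2 := sq_le_sq' (abs_le.1 ht).1 (abs_le.1 ht).2
    rw [multiplicativeProcess_snoc]
    calc _ ≤ Real.exp (-(c * (M n s - M 0 emptySit)) - 2 * n * (c * B) ^ 2) *
          Real.exp (-(t + 2 * t ^ 2)) := by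
          rw [← Real.exp_add, Real.exp_le_exp]
          push_cast
          nlinarith
      _ ≤ _ := mul_le_mul ih (exp_neg_le_one_sub ((le_abs_self t).trans (ht.trans hcB)))
          (Real.exp_pos _).le (multiplicativeProcess_nonneg hc hB hcB n s)

lemma isTestSupermartingale_multiplicativeProcess [∀ n, Fintype (𝒳 n)] [∀ n, Nonempty (𝒳 n)]
    (hQ : ∀ n s, IsLE (Q n s)) (hM : IsSubmartingale Q M) (hc : 0 ≤ c)
    (hB : ∀ n s x, |M (n + 1) (snoc s x) - M n s| ≤ B) (hcB : c * B ≤ 1 / 2) :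
    IsTestSupermartingale Q (multiplicativeProcess M c) := by
  refine ⟨isSupermartingale_iff.2 fun n s => ?_, multiplicativeProcess_nonneg hc hB hcB, rfl⟩
  set P := multiplicativeProcess M c
  have hPc : 0 ≤ P n s * c := mul_nonneg (multiplicativeProcess_nonneg hc hB hcB n s) hc
  have hdiff : (fun x => P n s - P (n + 1) (snoc s x))
      = fun x => (P n s * c) * (M (n + 1) (snoc s x) - M n s) :=
    funext fun x => by simp only [P, multiplicativeProcess_snoc]; ring
  rw [hdiff, (hQ n s).2.2 _ _ hPc]
  exact mul_nonneg hPc (hM n s)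

end Multiplicative

theorem exists_isTestSupermartingale_tendsto_of_frequently_le [∀ n, Fintype (𝒳 n)]
    [∀ n, Nonempty (𝒳 n)] (hQ : ∀ n s, IsLE (Q n s)) {M : ∀ n, Sit 𝒳 n → ℝ}
    (hM : IsSubmartingale Q M) {B ε : ℝ} (hε : 0 < ε) (hεB : ε ≤ B)
    (hB : ∀ n s x, |M (n + 1) (snoc s x) - M n s| ≤ B) :
    ∃ G, IsTestSupermartingale Q G ∧ (∀ n s, G n s ≤ 2 ^ n) ∧ ∀ ω : Path 𝒳,
      (∃ᶠ n in atTop, M n (res ω n) - M 0 emptySit ≤ -ε * n) →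
        Tendsto (fun n => G n (res ω n)) atTop atTop := by
  have hB0 : 0 < B := hε.trans_le hεB
  set c := ε / (4 * B ^ 2) with hc_def
  have hc : 0 < c := by positivity
  have hcB : c * B ≤ 1 / 2 := by
    rw [div_mul_eq_mul_div, div_le_iff₀ (by positivity)]
    nlinarith
  have hrate : 2 * c * B ^ 2 = ε / 2 := by
    rw [hc_def]
    field_simp
    ring
  obtain ⟨G, hG, hGC, hGtend⟩ := exists_isTestSupermartingale_tendsto_of_not_bddAbove hQ
    (isTestSupermartingale_multiplicativeProcess hQ hM hc.le hB hcB)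
    (pow_right_mono₀ one_le_two) (multiplicativeProcess_le_two_pow hc.le hB hcB)
  refine ⟨G, hG, hGC, fun ω hω => hGtend ω ?_⟩
  have hgrowth : ∃ᶠ n : ℕ in atTop,
      Real.exp (c * ε / 2 * n) ≤ multiplicativeProcess M c n (res ω n) := by
    refine hω.mono fun n hn => le_trans ?_ (exp_le_multiplicativeProcess hc.le hB hcB n _)
    rw [Real.exp_le_exp]
    have hquad : 2 * (n : ℝ) * (c * B) ^ 2 = c * ε / 2 * n := by
      linear_combination (n : ℝ) * c * hrate
    nlinarith [mul_le_mul_of_nonneg_left hn hc.le]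
  have hexp : Tendsto (fun n : ℕ => Real.exp (c * ε / 2 * n)) atTop atTop :=
    Real.tendsto_exp_atTop.comp (tendsto_natCast_atTop_atTop.const_mul_atTop (by positivity))
  rw [not_bddAbove_iff]
  intro K
  obtain ⟨n, hn, hK⟩ := (hgrowth.and_eventually (hexp.eventually_gt_atTop K)).exists
  exact ⟨_, ⟨n, rfl⟩, hK.trans_le hn⟩

end Processes

/-- Strong law of large numbers for submartingale differences. -/
theorem slln {𝒳 : ℕ → Type} [∀ n, Fintype (𝒳 n)] [∀ n, Nonempty (𝒳 n)]
    (Q : ∀ n, Sit 𝒳 n → (𝒳 n → ℝ) → ℝ) (hQ : ∀ n s, IsLE (Q n s))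
    (M : ∀ n, Sit 𝒳 n → ℝ) (hM : IsSubmartingale Q M)
    (B : ℝ) (hB : ∀ (n : ℕ) (s : Sit 𝒳 n) (x : 𝒳 n), |M (n + 1) (snoc s x) - M n s| ≤ B) :
    StrictlyNull Q {ω : Path 𝒳 | Filter.liminf
      (fun n : ℕ => (((M n (res ω n) - M 0 emptySit) / (n : ℝ) : ℝ) : EReal)) atTop < 0} := by
  have hB' : ∀ n s x, |M (n + 1) (snoc s x) - M n s| ≤ max B 1 :=
    fun n s x => (hB n s x).trans (le_max_left _ _)
  have hε : ∀ i : ℕ, 0 < 1 / ((i : ℝ) + 1) := fun i => by positivity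
  have hεB : ∀ i : ℕ, 1 / ((i : ℝ) + 1) ≤ max B 1 := fun i =>
    (div_le_one_of_le₀ (by linarith [i.cast_nonneg (α := ℝ)]) (by positivity)).trans
      (le_max_right _ _)
  choose G hG hG2 hGtend using fun i =>
    exists_isTestSupermartingale_tendsto_of_frequently_le hQ hM (hε i) (hεB i) hB'
  have hw : ∀ i, 0 ≤ geomWeight i := fun i => (geomWeight_pos i).le
  refine ⟨mix geomWeight G, isTestSupermartingale_mix hQ hw hasSum_geomWeight hG hG2,
    fun ω hω => ?_⟩
  obtain ⟨i, hi⟩ := exists_frequently_le_of_liminf_div_lt_zero hω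
  exact tendsto_mix_atTop hw hasSum_geomWeight (fun i => (hG i).2.1) hG2 (geomWeight_pos i)
    (hGtend i ω hi)

end IP
end

section
/- (Markov property for global models.) Consider an imprecise Markov chain. For any extended real variable f : Ω → ℝ ∪ {−∞,+∞}, any situation s and any x ∈ 𝒳: E(f | sx) = E(f(s·) | x), where sx denotes the situation obtained by appending x to s, and f(s·) is the extended real variable defined by f(s·)(ω) := f(sω), with sω the path obtained by prefixing ω with s. -/
open Filter Topology

namespace IP

section MarkovAux
set_option linter.unusedSectionVars false

variable {X : Type} [Fintype X] [Nonempty X]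

lemma snoc_apply {n : ℕ} (s : Sit (fun _ => X) n) (x : X) (i : Fin (n+1)) :
    snoc s x i = if h : (i:ℕ) < n then s ⟨i, h⟩ else x := rfl

def concat {n k : ℕ} (s : Fin n → X) (t : Fin k → X) : Fin (n+k) → X :=
  fun i => if h : (i:ℕ) < n then s ⟨i, h⟩ else t ⟨(i:ℕ) - n, by have := i.isLt; omega⟩

lemma eval_nat_cast (G : ∀ k, Sit (fun _ => X) k → ℝ) {a b : ℕ} (h : a = b) (t : Fin a → X) :
    G a t = G b (fun j => t ⟨j, h ▸ j.isLt⟩) := by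
  subst h; rfl

lemma isLE_zero {Y : Type} [Fintype Y] [Nonempty Y] {E : (Y → ℝ) → ℝ} (h : IsLE E) :
    E (fun _ => 0) = 0 := by
  have := h.2.2 (fun _ => 0) 0 le_rfl
  simpa using this

lemma isLE_nonneg {Y : Type} [Fintype Y] [Nonempty Y] {E : (Y → ℝ) → ℝ} (h : IsLE E)
    {f : Y → ℝ} (hf : ∀ y, 0 ≤ f y) : 0 ≤ E f :=
  le_trans (le_ciInf hf) (h.1 f)

lemma markovQ_isLE (E1 : (X → ℝ) → ℝ) (QT : X → (X → ℝ) → ℝ)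
    (hE1 : IsLE E1) (hQT : ∀ x, IsLE (QT x)) (m : ℕ) (u : Sit (fun _ => X) m) :
    IsLE (markovQ E1 QT m u) := by
  cases m with
  | zero => exact hE1
  | succ k => exact hQT _

lemma markovQ_pos (E1 : (X → ℝ) → ℝ) (QT : X → (X → ℝ) → ℝ) (m : ℕ) (hm : 0 < m)
    (u : Sit (fun _ => X) m) :
    markovQ E1 QT m u = QT (u ⟨m - 1, by omega⟩) := by
  cases m with
  | zero => omega
  | succ k => rfl

lemma concat_snoc {n k : ℕ} (s : Fin n → X) (t : Fin k → X) (y : X) :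
    concat s (snoc (𝒳 := fun _ => X) t y) = snoc (𝒳 := fun _ => X) (concat s t) y := by
  funext i
  have hi := i.isLt
  simp only [concat, snoc_apply]
  split_ifs
  any_goals rfl
  all_goals omega

lemma concat_single {n : ℕ} (s : Fin n → X) (x : X) :
    concat s (fun _ : Fin 1 => x) = snoc (𝒳 := fun _ => X) s x := by
  funext i
  simp only [concat, snoc_apply]
  try split_ifs
  all_goals rfl

/-- Shift a process for situation `s⌢x` (length `n+1`) to one for situation `(x)` (length 1). -/
noncomputable def push {n : ℕ} (s : Fin n → X) (F : ∀ k, Sit (fun _ => X) k → ℝ) :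
    ∀ k, Sit (fun _ => X) k → ℝ
  | 0, _ => ⨅ y : X, F (n + 1) (concat s (fun _ : Fin 1 => y))
  | (k+1), t => F (n + (k + 1)) (concat s t)

/-- Compatibility of a situation with the prefix `s⌢x`. -/
def compat {n : ℕ} (s : Fin n → X) (x : X) (m : ℕ) (u : Fin m → X) : Prop :=
  ∀ (i : ℕ) (hi : i < m) (hn : i < n + 1), u ⟨i, hi⟩ = snoc (𝒳 := fun _ => X) s x ⟨i, hn⟩

/- Transport a process for situation `(x)` back to one for situation `s⌢x`. -/
open Classical in
noncomputable def pull {n : ℕ} (s : Fin n → X) (x : X) (B : ℝ)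
    (G : ∀ k, Sit (fun _ => X) k → ℝ) (m : ℕ) (u : Fin m → X) : ℝ :=
  if compat s x m u then
    if hm : n + 1 ≤ m then
      G (m - n) (fun j => u ⟨n + (j:ℕ), by have := j.isLt; omega⟩)
    else G 1 (fun _ => x)
  else B

lemma pull_eval_deep {n : ℕ} (s : Fin n → X) (x : X) (B : ℝ) (G : ∀ k, Sit (fun _ => X) k → ℝ)
    (m : ℕ) (u : Fin m → X) (hc : compat s x m u) (hm : n + 1 ≤ m) :
    pull s x B G m u = G (m - n) (fun j => u ⟨n + (j:ℕ), by have := j.isLt; omega⟩) := by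
  rw [pull, if_pos hc, dif_pos hm]

lemma pull_eval_shallow {n : ℕ} (s : Fin n → X) (x : X) (B : ℝ)
    (G : ∀ k, Sit (fun _ => X) k → ℝ) (m : ℕ) (u : Fin m → X)
    (hc : compat s x m u) (hm : ¬ n + 1 ≤ m) :
    pull s x B G m u = G 1 (fun _ => x) := by
  rw [pull, if_pos hc, dif_neg hm]

lemma pull_eval_bad {n : ℕ} (s : Fin n → X) (x : X) (B : ℝ)
    (G : ∀ k, Sit (fun _ => X) k → ℝ) (m : ℕ) (u : Fin m → X) (hc : ¬ compat s x m u) :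
    pull s x B G m u = B := by
  rw [pull, if_neg hc]

lemma compat_of_snoc {n : ℕ} {s : Fin n → X} {x : X} {m : ℕ} {u : Fin m → X} {y : X}
    (h : compat s x (m+1) (snoc (𝒳 := fun _ => X) u y)) : compat s x m u := by
  intro i hi hn
  have h2 : (if h : i < m then u ⟨i, h⟩ else y) = snoc (𝒳 := fun _ => X) s x ⟨i, hn⟩ :=
    h i (by omega) hn
  rw [dif_pos hi] at h2
  exact h2

lemma compat_snoc_deep {n : ℕ} {s : Fin n → X} {x : X} {m : ℕ} {u : Fin m → X}
    (hm : n + 1 ≤ m) (hc : compat s x m u) (y : X) :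
    compat s x (m+1) (snoc (𝒳 := fun _ => X) u y) := by
  intro i hi hn
  rw [snoc_apply]
  have hi' : i < m := by omega
  rw [dif_pos hi']
  exact hc i hi' hn

lemma pull_snoc {n : ℕ} (s : Fin n → X) (x : X) (B : ℝ) (G : ∀ k, Sit (fun _ => X) k → ℝ) :
    pull s x B G (n+1) (snoc (𝒳 := fun _ => X) s x) = G 1 (fun _ => x) := by
  have hc : compat s x (n+1) (snoc (𝒳 := fun _ => X) s x) := fun i hi hn => rfl
  rw [pull_eval_deep s x B G (n+1) _ hc (le_refl (n+1)),
    eval_nat_cast G (show n+1-n = 1 by omega)]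
  congr 1
  funext j
  show snoc (𝒳 := fun _ => X) s x ⟨n + (j:ℕ), by omega⟩ = x
  rw [snoc_apply]
  exact dif_neg (show ¬ n + (j:ℕ) < n by omega)

end MarkovAux
section MarkovAux2
set_option linter.unusedSectionVars false
set_option linter.unreachableTactic false
set_option linter.unusedTactic false

variable {X : Type} [Fintype X] [Nonempty X]

lemma concat_apply_right {n k : ℕ} (s : Fin n → X) (t : Fin k → X) (i : Fin (n+k))
    (h : ¬ (i:ℕ) < n) : concat s t i = t ⟨(i:ℕ) - n, by have := i.isLt; omega⟩ :=
  dif_neg h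

lemma concat_apply_left {n k : ℕ} (s : Fin n → X) (t : Fin k → X) (i : Fin (n+k))
    (h : (i:ℕ) < n) : concat s t i = s ⟨(i:ℕ), h⟩ :=
  dif_pos h

variable (E1 : (X → ℝ) → ℝ) (QT : X → (X → ℝ) → ℝ)

lemma push_submartingale {n : ℕ} (s : Fin n → X)
    (hE1 : IsLE E1) (hQT : ∀ x, IsLE (QT x))
    (F : ∀ k, Sit (fun _ => X) k → ℝ) (hF : IsSubmartingale (markovQ E1 QT) F) :
    IsSubmartingale (markovQ E1 QT) (push s F) := by
  intro k t
  cases k with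
  | zero =>
      apply isLE_nonneg (markovQ_isLE E1 QT hE1 hQT 0 t)
      intro y
      have h1 : push s F 1 (snoc t y) = F (n+1) (concat s (fun _ : Fin 1 => y)) := by
        show F (n+1) (concat s (snoc (𝒳 := fun _ => X) t y)) = _
        congr 1
      show 0 ≤ push s F 1 (snoc t y) - push s F 0 t
      rw [h1, sub_nonneg]
      exact ciInf_le ((Set.finite_range _).bddBelow) y
  | succ k =>
      have key : (fun y => push s F (k+1+1) (snoc t y) - push s F (k+1) t)
          = fun y => F ((n+(k+1))+1) (snoc (𝒳 := fun _ => X) (concat s t) y)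
              - F (n+(k+1)) (concat s t) := by
        funext y
        show F (n+(k+1+1)) (concat s (snoc (𝒳 := fun _ => X) t y))
            - F (n+(k+1)) (concat s t) = _
        rw [concat_snoc]
        rfl
      have harg : t ⟨k+1-1, by omega⟩ = concat s t ⟨n+(k+1)-1, by omega⟩ := by
        rw [concat_apply_right s t _ (show ¬ (n + k) < n by omega)]
        exact congrArg t (Fin.ext (show (k : ℕ) = n + k - n by omega))
      have hq : markovQ E1 QT (k+1) t = markovQ E1 QT (n+(k+1)) (concat s t) := by
        rw [markovQ_pos E1 QT (k+1) (by omega), markovQ_pos E1 QT (n+(k+1)) (by omega)]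
        exact congrArg QT harg
      rw [key, hq]
      exact hF (n+(k+1)) (concat s t)

lemma pull_submartingale {n : ℕ} (s : Fin n → X) (x : X) (B : ℝ)
    (hE1 : IsLE E1) (hQT : ∀ x, IsLE (QT x))
    (G : ∀ k, Sit (fun _ => X) k → ℝ) (hG : IsSubmartingale (markovQ E1 QT) G)
    (hB : ∀ k t, G k t ≤ B) :
    IsSubmartingale (markovQ E1 QT) (pull s x B G) := by
  intro m u
  by_cases hc : compat s x m u
  · by_cases hm : n + 1 ≤ m
    · -- deep case
      set t : Fin (m-n) → X := fun j => u ⟨n + (j:ℕ), by have := j.isLt; omega⟩ with ht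
      have hchild : ∀ y, pull s x B G (m+1) (snoc u y)
          = G ((m-n)+1) (snoc (𝒳 := fun _ => X) t y) := by
        intro y
        rw [pull_eval_deep s x B G (m+1) _ (compat_snoc_deep hm hc y) (by omega),
          eval_nat_cast G (show m+1-n = (m-n)+1 by omega)]
        congr 1
        funext j
        show snoc (𝒳 := fun _ => X) u y ⟨n + (j:ℕ), by have := j.isLt; omega⟩
          = snoc (𝒳 := fun _ => X) t y j
        rw [snoc_apply, snoc_apply]
        by_cases hj : (j:ℕ) < m - n
        · rw [dif_pos (show n + (j:ℕ) < m by omega), dif_pos hj]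
          try rfl
        · rw [dif_neg (show ¬ n + (j:ℕ) < m by omega), dif_neg hj]
      have hpar : pull s x B G m u = G (m-n) t := pull_eval_deep s x B G m u hc hm
      have key : (fun y => pull s x B G (m+1) (snoc u y) - pull s x B G m u)
          = fun y => G ((m-n)+1) (snoc (𝒳 := fun _ => X) t y) - G (m-n) t := by
        funext y; rw [hchild y, hpar]
      have harg : u ⟨m-1, by omega⟩ = t ⟨m-n-1, by omega⟩ := by
        show u ⟨m-1, by omega⟩ = u ⟨n + (m-n-1), by omega⟩
        exact congrArg u (Fin.ext (show m - 1 = n + (m-n-1) by omega))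
      have hq : markovQ E1 QT m u = markovQ E1 QT (m-n) t := by
        rw [markovQ_pos E1 QT m (by omega), markovQ_pos E1 QT (m-n) (by omega)]
        exact congrArg QT harg
      rw [key, hq]
      exact hG (m-n) t
    · -- shallow case: m ≤ n
      apply isLE_nonneg (markovQ_isLE E1 QT hE1 hQT m u)
      intro y
      show 0 ≤ pull s x B G (m+1) (snoc u y) - pull s x B G m u
      rw [pull_eval_shallow s x B G m u hc hm, sub_nonneg]
      by_cases hy : y = snoc (𝒳 := fun _ => X) s x ⟨m, by omega⟩
      · have hcc : compat s x (m+1) (snoc (𝒳 := fun _ => X) u y) := by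
          intro i hi hn
          show (if h : i < m then u ⟨i, h⟩ else y) = snoc (𝒳 := fun _ => X) s x ⟨i, hn⟩
          by_cases hi' : i < m
          · rw [dif_pos hi']; exact hc i hi' hn
          · rw [dif_neg hi']
            have him : i = m := by omega
            subst him
            exact hy
        by_cases hm2 : n + 1 ≤ m + 1
        · -- m = n
          have hmn : m = n := by omega
          rw [pull_eval_deep s x B G (m+1) _ hcc hm2,
            eval_nat_cast G (show m+1-n = 1 by omega)]
          apply le_of_eq
          congr 1
          funext j
          show x = snoc (𝒳 := fun _ => X) u y ⟨n + ((⟨(j:ℕ), by omega⟩ : Fin (m+1-n)) : ℕ),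
            by omega⟩
          show x = (if h : n + (j:ℕ) < m then u ⟨n + (j:ℕ), h⟩ else y)
          rw [dif_neg (show ¬ n + (j:ℕ) < m by omega), hy]
          show x = if h : (m:ℕ) < n then s ⟨m, h⟩ else x
          rw [dif_neg (show ¬ m < n by omega)]
        · rw [pull_eval_shallow s x B G (m+1) _ hcc hm2]
      · have hnc : ¬ compat s x (m+1) (snoc (𝒳 := fun _ => X) u y) := by
          intro h
          apply hy
          have h2 : (if h : (m:ℕ) < m then u ⟨m, h⟩ else y)
              = snoc (𝒳 := fun _ => X) s x ⟨m, by omega⟩ := h m (by omega) (by omega)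
          rwa [dif_neg (show ¬ m < m by omega)] at h2
        rw [pull_eval_bad s x B G (m+1) _ hnc]
        exact hB 1 _
  · -- incompatible
    have key : (fun y => pull s x B G (m+1) (snoc u y) - pull s x B G m u)
        = fun _ => (0:ℝ) := by
      funext y
      have hnc : ¬ compat s x (m+1) (snoc (𝒳 := fun _ => X) u y) :=
        fun h => hc (compat_of_snoc h)
      rw [pull_eval_bad s x B G (m+1) _ hnc, pull_eval_bad s x B G m u hc, sub_self]
    rw [key, isLE_zero (markovQ_isLE E1 QT hE1 hQT m u)]

end MarkovAux2
section MarkovAux3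
set_option linter.unusedSectionVars false

variable {X : Type} [Fintype X] [Nonempty X]

lemma push_bdd {n : ℕ} (s : Fin n → X) (F : ∀ k, Sit (fun _ => X) k → ℝ)
    (hF : BddAbv F) : BddAbv (push s F) := by
  obtain ⟨B, hB⟩ := hF
  refine ⟨B, fun k t => ?_⟩
  cases k with
  | zero =>
      exact le_trans (ciInf_le ((Set.finite_range _).bddBelow) (Classical.arbitrary X)) (hB _ _)
  | succ k => exact hB _ _

lemma pull_bdd {n : ℕ} (s : Fin n → X) (x : X) (B : ℝ) (G : ∀ k, Sit (fun _ => X) k → ℝ)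
    (hB : ∀ k t, G k t ≤ B) : BddAbv (𝒳 := fun _ => X) (pull s x B G) := by
  refine ⟨B, fun m u => ?_⟩
  rw [pull]
  split_ifs with h1 h2
  · exact hB _ _
  · exact hB _ _
  · exact le_refl B

lemma push_limsup {n : ℕ} (s : Fin n → X) (F : ∀ k, Sit (fun _ => X) k → ℝ)
    (ω' : Path (fun _ => X)) :
    pathLimsup (push s F) ω' = pathLimsup F (prependX s ω') := by
  rw [pathLimsup, pathLimsup,
    ← limsup_nat_add (fun m => (F m (res (prependX s ω') m) : EReal)) (n+1),
    ← limsup_nat_add (fun k => ((push s F) k (res ω' k) : EReal)) 1]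
  congr 1
  funext k
  show ((push s F (k+1) (res ω' (k+1)) : ℝ) : EReal)
      = ((F (k+(n+1)) (res (prependX s ω') (k+(n+1))) : ℝ) : EReal)
  norm_cast
  show F (n+(k+1)) (concat s (res ω' (k+1))) = _
  rw [eval_nat_cast F (show n+(k+1) = k+(n+1) by omega)]
  congr 1

lemma pull_limsup {n : ℕ} (s : Fin n → X) (x : X) (B : ℝ)
    (G : ∀ k, Sit (fun _ => X) k → ℝ) (ω : Path (fun _ => X))
    (hω : res ω (n+1) = snoc (𝒳 := fun _ => X) s x) :
    pathLimsup (pull s x B G) ω = pathLimsup G (fun i => ω (n + i)) := by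
  have hc_i : ∀ (i : ℕ) (hn : i < n+1), ω i = snoc (𝒳 := fun _ => X) s x ⟨i, hn⟩ :=
    fun i hn => congrFun hω ⟨i, hn⟩
  rw [pathLimsup, pathLimsup,
    ← limsup_nat_add (fun m => ((pull s x B G) m (res ω m) : EReal)) (n+1),
    ← limsup_nat_add (fun k => (G k (res (fun i => ω (n + i)) k) : EReal)) 1]
  congr 1
  funext k
  show (((pull s x B G) (k+(n+1)) (res ω (k+(n+1))) : ℝ) : EReal)
      = ((G (k+1) (res (fun i => ω (n + i)) (k+1)) : ℝ) : EReal)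
  norm_cast
  have hc : compat s x (k+(n+1)) (res ω (k+(n+1))) := fun i hi hn => hc_i i hn
  rw [pull_eval_deep s x B G (k+(n+1)) _ hc (by omega),
    eval_nat_cast G (show k+(n+1)-n = k+1 by omega)]
  congr 1

end MarkovAux3
/-- Markov property for the global models. -/
theorem markov_property {X : Type} [Fintype X] [Nonempty X]
    (E1 : (X → ℝ) → ℝ) (QT : X → (X → ℝ) → ℝ)
    (hE1 : IsLE E1) (hQT : ∀ x : X, IsLE (QT x))
    (f : Path (fun _ => X) → EReal) {n : ℕ} (s : Sit (fun _ => X) n) (x : X) :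
    lexp (markovQ E1 QT) (snoc s x) f
      = lexp (markovQ E1 QT) (fun _ : Fin 1 => x) (fun ω => f (prependX s ω)) := by
  simp only [lexp]
  refine congrArg sSup (Set.Subset.antisymm ?_ ?_)
  · rintro v ⟨F, ⟨hsub, hbdd, hlim⟩, rfl⟩
    refine ⟨push s F, ⟨push_submartingale E1 QT s hE1 hQT F hsub, push_bdd s F hbdd, ?_⟩, ?_⟩
    · intro ω' hω'
      rw [push_limsup]
      apply hlim
      have hx0 : ω' 0 = x := congrFun hω' ⟨0, by omega⟩
      funext i
      show (if h : (i:ℕ) < n then s ⟨i, h⟩ else ω' ((i:ℕ) - n))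
          = snoc (𝒳 := fun _ => X) s x i
      rw [snoc_apply]
      by_cases h : (i:ℕ) < n
      · rw [dif_pos h, dif_pos h]
      · rw [dif_neg h, dif_neg h]
        have h0 : (i:ℕ) - n = 0 := by have := i.isLt; omega
        rw [h0, hx0]
    · show ((push s F 1 (fun _ => x) : ℝ) : EReal) = _
      norm_cast
  · rintro v ⟨G, ⟨hsub, hbdd, hlim⟩, rfl⟩
    obtain ⟨B, hB⟩ := hbdd
    refine ⟨pull s x B G,
      ⟨pull_submartingale E1 QT s x B hE1 hQT G hsub hB, pull_bdd s x B G hB, ?_⟩, ?_⟩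
    · intro ω hω
      rw [pull_limsup s x B G ω hω]
      have hres1 : res (fun i => ω (n + i)) 1 = (fun _ : Fin 1 => x) := by
        funext j
        show ω (n + (j:ℕ)) = x
        have hj : (j:ℕ) = 0 := by omega
        rw [hj]
        show ω n = x
        have h2 : ω n = (if h : n < n then s ⟨n, h⟩ else x) := congrFun hω ⟨n, by omega⟩
        rwa [dif_neg (show ¬ n < n by omega)] at h2
      have hp : prependX s (fun i => ω (n + i)) = ω := by
        funext i
        show (if h : i < n then s ⟨i, h⟩ else ω (n + (i - n))) = ω i
        by_cases h : i < n
        · rw [dif_pos h]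
          have h2 : ω i = (if hh : i < n then s ⟨i, hh⟩ else x) := congrFun hω ⟨i, by omega⟩
          rw [dif_pos h] at h2
          exact h2.symm
        · rw [dif_neg h]
          congr 1
          omega
      have := hlim (fun i => ω (n + i)) hres1
      rwa [hp] at this
    · show ((pull s x B G (n+1) (snoc s x) : ℝ) : EReal) = _
      rw [pull_snoc]
end IP
end

section
/- Consider any submartingale M in an imprecise probability tree and any situation s. Then M(s) ≤ sup_{ω∈⟦s⟧} liminf M(ω) ≤ sup_{ω∈⟦s⟧} limsup M(ω). -/
open Filter Topology

namespace IP

private lemma exists_ge_of_le_E {Y : Type} [Fintype Y] [Nonempty Y] {E : (Y → ℝ) → ℝ}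
    (hE : IsLE E) {g : Y → ℝ} (hg : 0 ≤ E g) : ∃ y, 0 ≤ g y := by
  obtain ⟨h1, h2, h3⟩ := hE
  have hE0 : E (fun _ => 0) = 0 := by
    have := h3 g 0 le_rfl
    simpa using this
  have hsum : E g + E (fun y => -g y) ≤ 0 := by
    have := h2 g (fun y => -g y)
    simpa [hE0] using this
  obtain ⟨y₀, hy₀⟩ := Finite.exists_max g
  have hinf : -g y₀ ≤ E (fun y => -g y) := by
    refine le_trans ?_ (h1 _)
    exact le_ciInf fun y => neg_le_neg (hy₀ y)
  exact ⟨y₀, by linarith⟩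

private lemma res_snoc' {𝒳 : ℕ → Type} (ω : Path 𝒳) (m : ℕ) :
    res ω (m+1) = snoc (res ω m) (ω m) := by
  funext i
  unfold res snoc
  split
  · rfl
  · next h =>
    rcases i with ⟨iv, hlt⟩
    have hv : iv = m := Nat.le_antisymm (Nat.lt_succ_iff.mp hlt) (Nat.le_of_not_lt h)
    subst hv
    rfl

/-- A submartingale is dominated by the supremum of its path liminfs, and that by the
supremum of its path limsups. -/
theorem submartingale_liminf_bound {𝒳 : ℕ → Type} [∀ n, Fintype (𝒳 n)] [∀ n, Nonempty (𝒳 n)]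
    (Q : ∀ n, Sit 𝒳 n → (𝒳 n → ℝ) → ℝ) (hQ : ∀ n s, IsLE (Q n s))
    (M : ∀ n, Sit 𝒳 n → ℝ) (hM : IsSubmartingale Q M)
    {n : ℕ} (s : Sit 𝒳 n) :
    ((M n s : EReal) ≤ ⨆ ω ∈ {ω : Path 𝒳 | res ω n = s}, pathLiminf M ω) ∧
    ((⨆ ω ∈ {ω : Path 𝒳 | res ω n = s}, pathLiminf M ω)
        ≤ ⨆ ω ∈ {ω : Path 𝒳 | res ω n = s}, pathLimsup M ω) := by
  classical
  constructor
  · have key : ∀ k (t : Sit 𝒳 k), ∃ x, M k t ≤ M (k+1) (snoc t x) := by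
      intro k t
      obtain ⟨x, hx⟩ := exists_ge_of_le_E (hQ k t) (hM k t)
      exact ⟨x, by linarith⟩
    set pick : ∀ k, Sit 𝒳 k → 𝒳 k := fun k t => (key k t).choose with hpick
    have pick_spec : ∀ k t, M k t ≤ M (k+1) (snoc t (pick k t)) := fun k t => (key k t).choose_spec
    set aux : ∀ i, Sit 𝒳 i := fun i => Nat.rec (fun j => j.elim0)
      (fun i a => snoc a (if h : i < n then s ⟨i, h⟩ else pick i a)) i with haux
    have aux_succ : ∀ i, aux (i+1)
        = snoc (aux i) (if h : i < n then s ⟨i, h⟩ else pick i (aux i)) := fun i => rfl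
    set ω : Path 𝒳 := fun i => aux (i+1) ⟨i, Nat.lt_succ_self i⟩ with hω
    have compat : ∀ m j (h : j < m), aux m ⟨j, h⟩ = ω j := by
      intro m
      induction m with
      | zero => intro j h; exact absurd h (Nat.not_lt_zero j)
      | succ m ih =>
        intro j h
        rcases Nat.lt_succ_iff_lt_or_eq.mp h with h' | h'
        · rw [aux_succ]
          unfold snoc
          split
          · next hh => exact ih j hh
          · next hh => exact absurd h' hh
        · subst h'
          rfl
    have res_eq : ∀ m, res ω m = aux m := by
      intro m; funext j; exact (compat m j j.isLt).symm
    have omega_lt : ∀ j (h : j < n), ω j = s ⟨j, h⟩ := by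
      intro j h
      show snoc (aux j) _ ⟨j, Nat.lt_succ_self j⟩ = s ⟨j, h⟩
      unfold snoc
      simp only [lt_irrefl, dif_neg, not_false_iff]
      rw [dif_pos h]
      rfl
    have omega_ge : ∀ j, n ≤ j → ω j = pick j (aux j) := by
      intro j h
      show snoc (aux j) _ ⟨j, Nat.lt_succ_self j⟩ = _
      unfold snoc
      simp only [lt_irrefl, dif_neg, not_false_iff]
      rw [dif_neg (Nat.not_lt.mpr h)]
      rfl
    have res_n : res ω n = s := by
      funext j; exact omega_lt j j.isLt
    have growth : ∀ m, n ≤ m → M n s ≤ M m (res ω m) := by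
      intro m hm
      induction m, hm using Nat.le_induction with
      | base => rw [res_n]
      | succ m hm ih =>
        refine le_trans ih ?_
        rw [res_snoc' ω m]
        have hωm : ω m = pick m (res ω m) := by
          rw [res_eq]; exact omega_ge m hm
        rw [hωm]
        exact pick_spec m (res ω m)
    have hlim : (M n s : EReal) ≤ pathLiminf M ω := by
      have hev : ∀ᶠ m in atTop, (M n s : EReal) ≤ (M m (res ω m) : EReal) := by
        filter_upwards [eventually_ge_atTop n] with m hm
        exact_mod_cast growth m hm
      calc (M n s : EReal) = liminf (fun _ : ℕ => (M n s : EReal)) atTop := (liminf_const _).symm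
        _ ≤ _ := liminf_le_liminf hev
    exact le_trans hlim (le_biSup _ res_n)
  · refine iSup₂_mono fun ω _ => ?_
    exact liminf_le_limsup


end IP
end

section
/- In any imprecise probability tree: (i) every strictly null event is null; (ii) no exact event ⟦x_{1:n}⟧ (n ∈ ℕ) is strictly null; and (iii) if a situation x_{1:n+1} satisfies Q̄(1_{{x_{n+1}}} | x_{1:n}) = 0 for its local conjugate upper expectation, then the exact event ⟦x_{1:n+1}⟧ is null. In particular, null events need not be strictly null. -/
open Filter Topology

namespace IP

section Aux

variable {𝒳 : ℕ → Type}

lemma snoc_lt {n : ℕ} (s : Sit 𝒳 n) (x : 𝒳 n) (i : ℕ) (hi : i < n) (hi' : i < n + 1) :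
    snoc s x ⟨i, hi'⟩ = s ⟨i, hi⟩ := dif_pos hi

lemma snoc_last {n : ℕ} (s : Sit 𝒳 n) (x : 𝒳 n) (h : n < n + 1) :
    snoc s x ⟨n, h⟩ = x := by
  show dite _ _ _ = x
  rw [dif_neg (Nat.lt_irrefl n)]
  exact cast_eq _ x

lemma trunc_snoc_s9 {m : ℕ} (t : Sit 𝒳 m) (x : 𝒳 m) (k : ℕ) (h : k ≤ m) (h' : k ≤ m + 1) :
    trunc (snoc t x) k h' = trunc t k h := by
  funext i
  exact snoc_lt t x i (lt_of_lt_of_le i.isLt h) _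

lemma trunc_self {k : ℕ} (u : Sit 𝒳 k) (h : k ≤ k) : trunc u k h = u := rfl

lemma trunc_res (ω : Path 𝒳) (k j : ℕ) (h : j ≤ k) : trunc (res ω k) j h = res ω j := rfl

lemma res_zero (ω : Path 𝒳) : res ω 0 = emptySit := by
  funext i
  exact i.elim0

lemma E_zero {Y : Type} [Fintype Y] [Nonempty Y] {E : (Y → ℝ) → ℝ} (hE : IsLE E) :
    E (fun _ => 0) = 0 := by
  have h := hE.2.2 (fun _ => 0) 0 le_rfl
  simpa using h

lemma exists_nonneg_of_nonneg_E {Y : Type} [Fintype Y] [Nonempty Y] {E : (Y → ℝ) → ℝ}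
    (hE : IsLE E) {f : Y → ℝ} (hf : 0 ≤ E f) : ∃ y, 0 ≤ f y := by
  by_contra hcon
  push_neg at hcon
  obtain ⟨y0, hy0⟩ := Finite.exists_max f
  have h1 : E f + E (fun y => -f y) ≤ E (fun _ => 0) := by
    have h := hE.2.1 f (fun y => -f y)
    have e : (fun y => f y + (fun y => -f y) y) = fun _ => (0:ℝ) := by
      funext y; ring
    rwa [e] at h
  rw [E_zero hE] at h1
  have h2 : (-f y0 : ℝ) ≤ E (fun y => -f y) :=
    le_trans (le_ciInf fun y => by linarith [hy0 y]) (hE.1 (fun y => -f y))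
  have := hcon y0
  linarith

/-- Chain of situations along which `F` never decreases. -/
noncomputable def chain (F : ∀ k, Sit 𝒳 k → ℝ)
    (h : ∀ m (t : Sit 𝒳 m), ∃ x, F m t ≤ F (m + 1) (snoc t x))
    {n : ℕ} (s : Sit 𝒳 n) : ∀ m, Sit 𝒳 (n + m)
  | 0 => s
  | m + 1 => snoc (chain F h s m) (h (n + m) (chain F h s m)).choose

noncomputable def chainPath (F : ∀ k, Sit 𝒳 k → ℝ)
    (h : ∀ m (t : Sit 𝒳 m), ∃ x, F m t ≤ F (m + 1) (snoc t x))
    {n : ℕ} (s : Sit 𝒳 n) : Path 𝒳 := fun i =>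
  if hi : i < n then s ⟨i, hi⟩ else chain F h s (i - n + 1) ⟨i, by omega⟩

lemma chain_congr (F : ∀ k, Sit 𝒳 k → ℝ)
    (h : ∀ m (t : Sit 𝒳 m), ∃ x, F m t ≤ F (m + 1) (snoc t x))
    {n : ℕ} (s : Sit 𝒳 n) {a b : ℕ} (hab : a = b) (i : ℕ)
    (hia : i < n + a) (hib : i < n + b) :
    chain F h s a ⟨i, hia⟩ = chain F h s b ⟨i, hib⟩ := by
  subst hab; rfl

lemma chain_spec (F : ∀ k, Sit 𝒳 k → ℝ)
    (h : ∀ m (t : Sit 𝒳 m), ∃ x, F m t ≤ F (m + 1) (snoc t x))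
    {n : ℕ} (s : Sit 𝒳 n) :
    ∀ m (i : ℕ) (hi : i < n + m), chainPath F h s i = chain F h s m ⟨i, hi⟩ := by
  intro m
  induction m with
  | zero =>
    intro i hi
    have hin : i < n := by omega
    simp only [chainPath]
    rw [dif_pos hin]
    rfl
  | succ m ih =>
    intro i hi
    by_cases hc : i < n + m
    · rw [show chain F h s (m+1) ⟨i, hi⟩ = chain F h s m ⟨i, hc⟩ from
        snoc_lt _ _ i hc hi]
      exact ih i hc
    · have hie : i = n + m := by omega
      subst hie
      simp only [chainPath]
      rw [dif_neg (show ¬ n + m < n by omega)]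
      exact chain_congr F h s (by omega) (n + m) (by omega) hi

lemma res_chainPath (F : ∀ k, Sit 𝒳 k → ℝ)
    (h : ∀ m (t : Sit 𝒳 m), ∃ x, F m t ≤ F (m + 1) (snoc t x))
    {n : ℕ} (s : Sit 𝒳 n) (m : ℕ) :
    res (chainPath F h s) (n + m) = chain F h s m := by
  funext i
  exact chain_spec F h s m i i.isLt

lemma res_chainPath_zero (F : ∀ k, Sit 𝒳 k → ℝ)
    (h : ∀ m (t : Sit 𝒳 m), ∃ x, F m t ≤ F (m + 1) (snoc t x))
    {n : ℕ} (s : Sit 𝒳 n) : res (chainPath F h s) n = s :=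
  res_chainPath F h s 0

lemma chain_mono (F : ∀ k, Sit 𝒳 k → ℝ)
    (h : ∀ m (t : Sit 𝒳 m), ∃ x, F m t ≤ F (m + 1) (snoc t x))
    {n : ℕ} (s : Sit 𝒳 n) : ∀ m, F n s ≤ F (n + m) (chain F h s m)
  | 0 => le_rfl
  | m + 1 => le_trans (chain_mono F h s m) (h (n + m) (chain F h s m)).choose_spec

/-- A submartingale is dominated by its limsup value bound along some path. -/
lemma submart_start_le [∀ n, Fintype (𝒳 n)] [∀ n, Nonempty (𝒳 n)]
    (Q : ∀ n, Sit 𝒳 n → (𝒳 n → ℝ) → ℝ) (hQ : ∀ n s, IsLE (Q n s))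
    (F : ∀ k, Sit 𝒳 k → ℝ) (hF : IsSubmartingale Q F) {n : ℕ} (s : Sit 𝒳 n)
    (c : EReal) (hlim : ∀ ω, res ω n = s → pathLimsup F ω ≤ c) :
    (F n s : EReal) ≤ c := by
  have hstep : ∀ m (t : Sit 𝒳 m), ∃ y, F m t ≤ F (m + 1) (snoc t y) := by
    intro m t
    obtain ⟨y, hy⟩ := exists_nonneg_of_nonneg_E (hQ m t) (hF m t)
    exact ⟨y, by linarith⟩
  have h0 : res (chainPath F hstep s) n = s := res_chainPath_zero F hstep s
  have hev : ∀ᶠ k in atTop,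
      (F n s : EReal) ≤ (F k (res (chainPath F hstep s) k) : EReal) := by
    filter_upwards [eventually_ge_atTop n] with k hk
    obtain ⟨m, rfl⟩ : ∃ m, k = n + m := ⟨k - n, by omega⟩
    rw [res_chainPath]
    exact EReal.coe_le_coe_iff.mpr (chain_mono F hstep s m)
  calc (F n s : EReal)
      ≤ liminf (fun k => (F k (res (chainPath F hstep s) k) : EReal)) atTop :=
        le_liminf_of_le (by isBoundedDefault) hev
    _ ≤ limsup (fun k => (F k (res (chainPath F hstep s) k) : EReal)) atTop :=
        liminf_le_limsup
    _ ≤ c := hlim _ h0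

lemma neg_one_le_zero_ereal : -(1:EReal) ≤ 0 := by
  rw [show -(1:EReal) = ((-1:ℝ):EReal) by norm_num]
  exact_mod_cast (by norm_num : (-1:ℝ) ≤ 0)

lemma neg_indicator_le_zero (A : Set (Path 𝒳)) (ω : Path 𝒳) :
    -(A.indicator (fun _ => (1:EReal)) ω) ≤ 0 := by
  by_cases hA : ω ∈ A
  · rw [Set.indicator_of_mem hA]
    exact neg_one_le_zero_ereal
  · rw [Set.indicator_of_notMem hA, neg_zero]

/-- Upper bound half: the lower expectation of minus an indicator is `≤ 0`. -/
lemma lexp_neg_indicator_le [∀ n, Fintype (𝒳 n)] [∀ n, Nonempty (𝒳 n)]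
    (Q : ∀ n, Sit 𝒳 n → (𝒳 n → ℝ) → ℝ) (hQ : ∀ n s, IsLE (Q n s))
    (A : Set (Path 𝒳)) :
    lexp Q emptySit (fun ω => -(A.indicator (fun _ => (1:EReal)) ω)) ≤ 0 := by
  apply sSup_le
  rintro a ⟨F, ⟨hFsub, hFbdd, hFlim⟩, rfl⟩
  exact submart_start_le Q hQ F hFsub emptySit 0 fun ω hω =>
    le_trans (hFlim ω hω) (neg_indicator_le_zero A ω)

lemma uexp_indicator_eq_zero [∀ n, Fintype (𝒳 n)] [∀ n, Nonempty (𝒳 n)]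
    (Q : ∀ n, Sit 𝒳 n → (𝒳 n → ℝ) → ℝ) (hQ : ∀ n s, IsLE (Q n s))
    (A : Set (Path 𝒳))
    (h : (0:EReal) ≤ lexp Q emptySit (fun ω => -(A.indicator (fun _ => (1:EReal)) ω))) :
    uexp Q emptySit (A.indicator fun _ => (1 : EReal)) = 0 := by
  show -lexp Q emptySit _ = 0
  rw [le_antisymm (lexp_neg_indicator_le Q hQ A) h]
  exact neg_zero

end Aux

section ExF

variable {𝒳 : ℕ → Type}

open Classical in
/-- Explicit submartingale witnessing nullity of an exact event with vanishing local
upper probability. -/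
noncomputable def exF (n : ℕ) (s : Sit 𝒳 n) (x : 𝒳 n) : ∀ k, Sit 𝒳 k → ℝ := fun k t =>
  if h : n + 1 ≤ k then (if trunc t (n + 1) h = snoc s x then -1 else 0) else 0

lemma exF_lt {n : ℕ} (s : Sit 𝒳 n) (x : 𝒳 n) (k : ℕ) (t : Sit 𝒳 k) (h : k < n + 1) :
    exF n s x k t = 0 := dif_neg (by omega)

open Classical in
lemma exF_ge {n : ℕ} (s : Sit 𝒳 n) (x : 𝒳 n) (k : ℕ) (t : Sit 𝒳 k) (h : n + 1 ≤ k) :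
    exF n s x k t = if trunc t (n + 1) h = snoc s x then -1 else 0 := dif_pos h

lemma exF_nonpos {n : ℕ} (s : Sit 𝒳 n) (x : 𝒳 n) (k : ℕ) (t : Sit 𝒳 k) :
    exF n s x k t ≤ 0 := by
  by_cases h : n + 1 ≤ k
  · rw [exF_ge s x k t h]
    split <;> norm_num
  · rw [exF_lt s x k t (by omega)]

lemma exF_submart [∀ n, Fintype (𝒳 n)] [∀ n, Nonempty (𝒳 n)]
    (Q : ∀ n, Sit 𝒳 n → (𝒳 n → ℝ) → ℝ) (hQ : ∀ n s, IsLE (Q n s))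
    {n : ℕ} (s : Sit 𝒳 n) (x : 𝒳 n)
    (hx : Q n s (fun y => -(({x} : Set (𝒳 n)).indicator (fun _ => (1 : ℝ)) y)) = 0) :
    IsSubmartingale Q (exF n s x) := by
  intro k t
  rcases lt_trichotomy k n with hk | rfl | hk
  · have e : (fun y => exF n s x (k + 1) (snoc t y) - exF n s x k t) = fun _ => (0:ℝ) := by
      funext y
      rw [exF_lt _ _ _ _ (by omega), exF_lt _ _ _ _ (by omega)]
      ring
    rw [e, E_zero (hQ k t)]
  · by_cases hts : t = s
    · subst hts
      have e : (fun y => exF k t x (k + 1) (snoc t y) - exF k t x k t)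
          = fun y => -(({x} : Set (𝒳 k)).indicator (fun _ => (1 : ℝ)) y) := by
        funext y
        rw [exF_ge _ _ _ _ le_rfl, exF_lt _ _ _ _ (by omega), trunc_self]
        by_cases hyx : y = x
        · subst hyx
          rw [if_pos rfl]
          norm_num [Set.indicator_of_mem]
        · rw [if_neg (fun hcontra => hyx (by
            have h2 := congrFun hcontra ⟨k, Nat.lt_succ_self k⟩
            rwa [snoc_last, snoc_last] at h2))]
          simp [Set.indicator_of_notMem, hyx]
      rw [e, hx]
    · have e : (fun y => exF k s x (k + 1) (snoc t y) - exF k s x k t) = fun _ => (0:ℝ) := by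
        funext y
        rw [exF_ge _ _ _ _ le_rfl, exF_lt _ _ _ _ (by omega), trunc_self]
        rw [if_neg (fun hcontra => hts (by
          have h2 : trunc (snoc t y) k (by omega) = trunc (snoc s x) k (by omega) := by
            rw [hcontra]
          rwa [trunc_snoc_s9 t y k le_rfl, trunc_snoc_s9 s x k le_rfl, trunc_self, trunc_self]
            at h2))]
        ring
      rw [e, E_zero (hQ k t)]
  · have e : (fun y => exF n s x (k + 1) (snoc t y) - exF n s x k t) = fun _ => (0:ℝ) := by
      funext y
      rw [exF_ge _ _ _ _ (by omega), exF_ge _ _ _ _ (show n + 1 ≤ k from hk),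
        trunc_snoc_s9 t y (n + 1) (show n + 1 ≤ k from hk) (by omega)]
      ring
    rw [e, E_zero (hQ k t)]

end ExF

/-- Strictly null events are null; exact events are never strictly null; exact events with
vanishing local upper probability are null. -/
theorem strictly_null_and_null {𝒳 : ℕ → Type} [∀ n, Fintype (𝒳 n)] [∀ n, Nonempty (𝒳 n)]
    (Q : ∀ n, Sit 𝒳 n → (𝒳 n → ℝ) → ℝ) (hQ : ∀ n s, IsLE (Q n s)) :
    (∀ A : Set (Path 𝒳), StrictlyNull Q A →
        uexp Q emptySit (A.indicator fun _ => (1 : EReal)) = 0)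
    ∧ (∀ n : ℕ, 0 < n → ∀ s : Sit 𝒳 n, ¬ StrictlyNull Q {ω : Path 𝒳 | res ω n = s})
    ∧ (∀ (n : ℕ) (s : Sit 𝒳 n) (x : 𝒳 n),
        -Q n s (fun y => -(({x} : Set (𝒳 n)).indicator (fun _ => (1 : ℝ)) y)) = 0 →
        uexp Q emptySit
          (({ω : Path 𝒳 | res ω (n + 1) = snoc s x}).indicator fun _ => (1 : EReal)) = 0) := by
  refine ⟨?_, ?_, ?_⟩
  · -- (i) strictly null events are null
    rintro A ⟨T, ⟨hTsuper, hTnn, hT1⟩, hTlim⟩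
    apply uexp_indicator_eq_zero Q hQ
    apply le_of_forall_lt
    intro c hc
    obtain ⟨r, hcr, hr0⟩ := EReal.lt_iff_exists_real_btwn.mp hc
    have hr0' : r < 0 := by exact_mod_cast hr0
    refine lt_of_lt_of_le hcr ?_
    have hmem : ((r * T 0 emptySit : ℝ) : EReal) ≤
        lexp Q emptySit (fun ω => -(A.indicator (fun _ => (1 : EReal)) ω)) := by
      apply le_sSup
      refine ⟨fun k t => r * T k t, ⟨?_, ?_, ?_⟩, rfl⟩
      · -- submartingale
        intro k t
        have e : (fun y => r * T (k + 1) (snoc t y) - r * T k t)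
            = fun y => (-r) * ((fun y => -T (k + 1) (snoc t y) - -T k t) y) := by
          funext y; ring
        have h2 := (hQ k t).2.2 (fun y => -T (k + 1) (snoc t y) - -T k t) (-r) (by linarith)
        rw [e, h2]
        exact mul_nonneg (by linarith) (hTsuper k t)
      · exact ⟨0, fun k t => mul_nonpos_iff.mpr (Or.inr ⟨hr0'.le, hTnn k t⟩)⟩
      · intro ω _
        dsimp only
        by_cases hA : ω ∈ A
        · rw [Set.indicator_of_mem hA]
          apply limsup_le_of_le (by isBoundedDefault)
          filter_upwards [(hTlim ω hA).eventually_ge_atTop (1 / (-r))] with k hk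
          rw [show -(1 : EReal) = ((-1 : ℝ) : EReal) by norm_num]
          apply EReal.coe_le_coe_iff.mpr
          have h3 : (-r) * (1 / (-r)) ≤ (-r) * T k (res ω k) :=
            mul_le_mul_of_nonneg_left hk (by linarith)
          have h4 : (-r) * (1 / (-r)) = 1 :=
            mul_one_div_cancel (by linarith)
          linarith
        · rw [Set.indicator_of_notMem hA, neg_zero]
          apply limsup_le_of_le (by isBoundedDefault)
          apply Eventually.of_forall
          intro k
          rw [show (0 : EReal) = ((0 : ℝ) : EReal) from rfl]
          apply EReal.coe_le_coe_iff.mpr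
          show r * T k (res ω k) ≤ 0
          exact mul_nonpos_iff.mpr (Or.inr ⟨hr0'.le, hTnn k (res ω k)⟩)
    rw [hT1, mul_one] at hmem
    exact hmem
  · -- (ii) exact events are not strictly null
    rintro n hn s ⟨T, ⟨hTsuper, hTnn, hT1⟩, hTlim⟩
    have hstep : ∀ m (t : Sit 𝒳 m), ∃ y,
        (fun k (u : Sit 𝒳 k) => -T k u) m t ≤
          (fun k (u : Sit 𝒳 k) => -T k u) (m + 1) (snoc t y) := by
      intro m t
      obtain ⟨y, hy⟩ := exists_nonneg_of_nonneg_E (hQ m t) (hTsuper m t)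
      have hy' : 0 ≤ -T (m + 1) (snoc t y) - -T m t := hy
      exact ⟨y, by simpa using by linarith⟩
    have h0 : res (chainPath (fun k (u : Sit 𝒳 k) => -T k u) hstep s) n = s :=
      res_chainPath_zero _ hstep s
    have htend := hTlim (chainPath (fun k (u : Sit 𝒳 k) => -T k u) hstep s) h0
    obtain ⟨k, hk1, hk2⟩ :=
      ((htend.eventually_ge_atTop (T n s + 1)).and (eventually_ge_atTop n)).exists
    obtain ⟨m, rfl⟩ : ∃ m, k = n + m := ⟨k - n, by omega⟩
    have hmono := chain_mono (fun k (u : Sit 𝒳 k) => -T k u) hstep s m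
    rw [res_chainPath] at hk1
    have hmono' : -T n s ≤ -T (n + m) (chain (fun k (u : Sit 𝒳 k) => -T k u) hstep s m) :=
      hmono
    linarith
  · -- (iii) exact events with vanishing local upper probability are null
    intro n s x hx
    have hx' : Q n s (fun y => -(({x} : Set (𝒳 n)).indicator (fun _ => (1 : ℝ)) y)) = 0 :=
      neg_eq_zero.mp hx
    apply uexp_indicator_eq_zero Q hQ
    have hmem : ((exF n s x 0 emptySit : ℝ) : EReal) ≤
        lexp Q emptySit (fun ω =>
          -(({ω : Path 𝒳 | res ω (n + 1) = snoc s x}).indicator (fun _ => (1 : EReal)) ω)) := by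
      apply le_sSup
      refine ⟨exF n s x, ⟨exF_submart Q hQ s x hx', ⟨0, fun k t => exF_nonpos s x k t⟩, ?_⟩, rfl⟩
      intro ω _
      dsimp only
      by_cases hωE : res ω (n + 1) = snoc s x
      · rw [Set.indicator_of_mem (show ω ∈ {ω : Path 𝒳 | res ω (n + 1) = snoc s x} from hωE)]
        apply limsup_le_of_le (by isBoundedDefault)
        filter_upwards [eventually_ge_atTop (n + 1)] with k hk
        rw [exF_ge s x k (res ω k) hk, trunc_res, if_pos hωE,
          show -(1 : EReal) = ((-1 : ℝ) : EReal) by norm_num]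
      · rw [Set.indicator_of_notMem
            (show ω ∉ {ω : Path 𝒳 | res ω (n + 1) = snoc s x} from hωE), neg_zero]
        apply limsup_le_of_le (by isBoundedDefault)
        apply Eventually.of_forall
        intro k
        rw [show (0 : EReal) = ((0 : ℝ) : EReal) from rfl]
        exact EReal.coe_le_coe_iff.mpr (exF_nonpos s x k (res ω k))
    rw [exF_lt s x 0 emptySit (by omega)] at hmem
    exact_mod_cast hmem


end IP
end
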